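/- arXiv:1305.4343 — 4 statements merged into one kernel-verified Lean document; each statement's English description precedes it below -/
import Mathlib

section
/- Let $R$ be an integral domain graded by an abelian group $K_2$, let $w \in K_2$ be an element of infinite order, and let $f \in R$ be homogeneous of degree $w$. Consider the coarser grading of $R$ by $K_1 := K_2/\langle w \rangle$. Then $f - 1$ is $K_1$-prime in $R$, i.e., whenever $f-1$ divides a product $ab$ of $K_1$-homogeneous elements $a, b \in R$, it divides $a$ or $b$. -/
/-!
Every `K₁`-homogeneous element is congruent modulo `f - 1` to a `K₂`-homogeneous one: its
`K₂`-components lie in a single coset `d + ℤw`, and multiplying a component by `f ^ n`, which is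
`1` modulo `f - 1`, moves it `n` steps up that coset. On the other hand `f - 1` divides no nonzero
`K₂`-homogeneous `x` of degree `e`: if `x = (f - 1) c`, comparing components along `e + ℤw` gives
`c_{e + (n+1)w} = f c_{e + nw}` except at `n = -1`, so finiteness of the support of `c` forces
`c_e = c_{e - w} = 0`, whence `x = f c_{e - w} - c_e = 0`. So if `f - 1 ∣ ab`, the homogeneous
representatives of `a` and `b` have product zero, and one of them vanishes.
-/

open DirectSum Function AddSubgroup

theorem exists_apply_comp_eq_zero_of_finite_support {α β M : Type*} [Zero M] [Infinite α]
    {g : β → M} (hg : (support g).Finite) {φ : α → β} (hφ : Injective φ) :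
    ∃ a, g (φ a) = 0 := by
  obtain ⟨a, ha⟩ := (hg.preimage hφ.injOn).exists_notMem
  exact ⟨a, notMem_support.mp ha⟩

theorem sub_one_dvd_sub_mul_pow {R : Type*} [CommRing R] (x f : R) (n : ℕ) :
    f - 1 ∣ x - x * f ^ n := by
  convert (sub_one_dvd_pow_sub_one f n).mul_left (-x) using 1
  ring

theorem apply_zero_eq_zero_and_apply_neg_one_eq_zero {R : Type*} [MonoidWithZero R]
    [NoZeroDivisors R] {f : R} (hf0 : f ≠ 0) {g : ℤ → R} (hg : (support g).Finite)
    (hstep : ∀ n, n ≠ -1 → g (n + 1) = f * g n) : g 0 = 0 ∧ g (-1) = 0 := by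
  have hup (k : ℕ) : g k = f ^ k * g 0 := by
    induction k with
    | zero => simp
    | succ k ih => rw [Nat.cast_succ, hstep _ (by omega), ih, pow_succ', mul_assoc]
  have hdown (k : ℕ) : g (-1) = f ^ k * g (-1 - k) := by
    induction k with
    | zero => simp
    | succ k ih =>
      have h := hstep (-1 - (k + 1 : ℕ)) (by omega)
      rw [show -1 - ((k + 1 : ℕ) : ℤ) + 1 = -1 - k by push_cast; ring] at h
      rw [ih, h, pow_succ, mul_assoc]
  obtain ⟨k, hk⟩ := exists_apply_comp_eq_zero_of_finite_support hg Nat.cast_injective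
  obtain ⟨l, hl⟩ := exists_apply_comp_eq_zero_of_finite_support hg
    (φ := fun l : ℕ => -1 - (l : ℤ)) fun _ _ h => by simpa using h
  exact ⟨(mul_eq_zero.mp ((hup k).symm.trans hk)).resolve_left (pow_ne_zero _ hf0),
    by rw [hdown l, hl, mul_zero]⟩

section GradedMonoid

variable {R K : Type*} [CommRing R] [AddCommGroup K] (𝒜 : K → AddSubgroup R)
  [SetLike.GradedMonoid 𝒜] {w : K} {f : R}

theorem exists_mem_add_nsmul_sub_one_dvd_add_sub (hf : f ∈ 𝒜 w) {d : K} {x₁ x₂ : R}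
    (hx₁ : x₁ ∈ 𝒜 d) (n : ℕ) (hx₂ : x₂ ∈ 𝒜 (d + n • w)) :
    ∃ x ∈ 𝒜 (d + n • w), f - 1 ∣ x₁ + x₂ - x := by
  refine ⟨x₁ * f ^ n + x₂, add_mem (SetLike.mul_mem_graded hx₁ (SetLike.pow_mem_graded n hf)) hx₂,
    ?_⟩
  convert sub_one_dvd_sub_mul_pow x₁ f n using 1
  ring

theorem exists_mem_sub_one_dvd_add_sub (hf : f ∈ 𝒜 w) {d₁ d₂ : K}
    (hd : (d₁ : K ⧸ zmultiples w) = d₂) {x₁ x₂ : R} (hx₁ : x₁ ∈ 𝒜 d₁) (hx₂ : x₂ ∈ 𝒜 d₂) :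
    ∃ d ∈ ({d₁, d₂} : Set K), ∃ x ∈ 𝒜 d, f - 1 ∣ x₁ + x₂ - x := by
  obtain ⟨m, hm⟩ := mem_zmultiples_iff.mp (QuotientAddGroup.eq.mp hd)
  obtain ⟨n, rfl | rfl⟩ := Int.eq_nat_or_neg m
  · have hd₂ : d₂ = d₁ + n • w := by rw [natCast_zsmul] at hm; rw [hm]; abel
    subst hd₂
    exact ⟨_, by simp, exists_mem_add_nsmul_sub_one_dvd_add_sub 𝒜 hf hx₁ n hx₂⟩
  · have hd₁ : d₁ = d₂ + n • w := by
      rw [neg_zsmul, natCast_zsmul, neg_eq_iff_eq_neg] at hm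
      rw [hm]; abel
    subst hd₁
    rw [add_comm x₁]
    exact ⟨_, by simp, exists_mem_add_nsmul_sub_one_dvd_add_sub 𝒜 hf hx₂ n hx₁⟩

theorem exists_mem_sub_one_dvd_sub_of_mem_iSup (hf : f ∈ 𝒜 w) (k : K ⧸ zmultiples w) {a : R}
    (ha : a ∈ ⨆ u ∈ {u : K | (u : K ⧸ zmultiples w) = k}, 𝒜 u) :
    ∃ d x, x ∈ 𝒜 d ∧ f - 1 ∣ a - x := by
  rw [iSup_subtype'] at ha
  obtain ⟨d, -, x, hx, hdvd⟩ : ∃ d : K, (d : K ⧸ zmultiples w) = k ∧ ∃ x ∈ 𝒜 d, f - 1 ∣ a - x := by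
    refine AddSubgroup.iSup_induction
      (C := fun y => ∃ d : K, (d : K ⧸ zmultiples w) = k ∧ ∃ x ∈ 𝒜 d, f - 1 ∣ y - x) _ ha
      (fun u y hy => ⟨u, u.2, y, hy, by simp⟩) ?_ ?_
    · obtain ⟨d, hd⟩ := QuotientAddGroup.mk_surjective k
      exact ⟨d, hd, 0, zero_mem _, by simp⟩
    · rintro y₁ y₂ ⟨d₁, hd₁, x₁, hx₁, hdvd₁⟩ ⟨d₂, hd₂, x₂, hx₂, hdvd₂⟩
      obtain ⟨d, hd, x, hx, hdvd⟩ :=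
        exists_mem_sub_one_dvd_add_sub 𝒜 hf (hd₁.trans hd₂.symm) hx₁ hx₂
      refine ⟨d, by rcases hd with rfl | rfl <;> assumption, x, hx, ?_⟩
      convert dvd_add (dvd_add hdvd₁ hdvd₂) hdvd using 1
      ring
  exact ⟨d, x, hx, hdvd⟩

end GradedMonoid

section GradedRing

variable {R K : Type*} [CommRing R] [AddCommGroup K] [DecidableEq K] (𝒜 : K → AddSubgroup R)
  [GradedRing 𝒜] {w : K} {f : R}

theorem coe_decompose_sub_one_mul_add (hf : f ∈ 𝒜 w) (c : R) (d : K) :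
    (decompose 𝒜 ((f - 1) * c) (w + d) : R) = f * decompose 𝒜 c d - decompose 𝒜 c (w + d) := by
  rw [sub_mul, one_mul, decompose_sub, DirectSum.sub_apply, AddSubgroup.coe_sub,
    coe_decompose_mul_add_of_left_mem 𝒜 hf]

theorem eq_zero_of_sub_one_dvd_of_mem [IsDomain R] (hw : addOrderOf w = 0) (hf : f ∈ 𝒜 w)
    (hf0 : f ≠ 0) {e : K} {x : R} (hx : x ∈ 𝒜 e) (hdvd : f - 1 ∣ x) : x = 0 := by
  obtain ⟨c, rfl⟩ := hdvd
  set g : ℤ → R := fun n => decompose 𝒜 c (e + n • w) with hg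
  have hinj : Injective fun n : ℤ => e + n • w :=
    (add_right_injective e).comp
      (injective_zsmul_iff_not_isOfFinAddOrder.mpr (addOrderOf_eq_zero_iff.mp hw))
  have hfin : (support g).Finite :=
    (DFinsupp.finite_support (decompose 𝒜 c)).preimage hinj.injOn |>.subset fun n hn => by
      simpa [hg] using hn
  have hcomp (n : ℤ) :
      (decompose 𝒜 ((f - 1) * c) (e + (n + 1) • w) : R) = f * g n - g (n + 1) := by
    have hshift : e + (n + 1) • w = w + (e + n • w) := by rw [add_zsmul, one_zsmul]; abel
    simp only [hg]
    rw [hshift, coe_decompose_sub_one_mul_add 𝒜 hf]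
  have hstep (n : ℤ) (hn : n ≠ -1) : g (n + 1) = f * g n := by
    have hne : e + (n + 1) • w ≠ e + (0 : ℤ) • w := fun h => hn (by linarith [hinj h])
    rw [zero_zsmul, add_zero] at hne
    rw [eq_comm, ← sub_eq_zero, ← hcomp, decompose_of_mem_ne 𝒜 hx hne.symm]
  obtain ⟨hg₀, hg₁⟩ := apply_zero_eq_zero_and_apply_neg_one_eq_zero hf0 hfin hstep
  calc (f - 1) * c = decompose 𝒜 ((f - 1) * c) (e + (-1 + 1 : ℤ) • w) := by
        rw [neg_add_cancel, zero_zsmul, add_zero, decompose_of_mem_same 𝒜 hx]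
    _ = 0 := by rw [hcomp, neg_add_cancel, hg₀, hg₁, mul_zero, sub_zero]

end GradedRing

/-- Let `R` be an integral domain graded by an abelian group `K₂`,
`w ∈ K₂` of infinite order, `f ∈ R` homogeneous of degree `w`.  With respect to the
coarsened grading by `K₁ = K₂ ⧸ ⟨w⟩`, the element `f - 1` is `K₁`-prime: whenever it
divides a product of `K₁`-homogeneous elements, it divides one of the factors. -/
theorem f_sub_one_K1_prime
    {R K₂ : Type*} [CommRing R] [IsDomain R] [AddCommGroup K₂] [DecidableEq K₂]
    (𝒜 : K₂ → AddSubgroup R) [SetLike.GradedMonoid 𝒜] [DirectSum.Decomposition 𝒜]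
    (w : K₂) (hw : addOrderOf w = 0) (f : R) (hf : f ∈ 𝒜 w)
    -- `K₁`-homogeneity with respect to the coarsened grading by `K₂ ⧸ ⟨w⟩`:
    (K1Homog : R → Prop)
    (hK1Homog : ∀ a : R, K1Homog a ↔
      ∃ k : K₂ ⧸ AddSubgroup.zmultiples w,
        a ∈ ⨆ u ∈ {u : K₂ |
          (QuotientAddGroup.mk u : K₂ ⧸ AddSubgroup.zmultiples w) = k}, 𝒜 u)
    (a b : R) (ha : K1Homog a) (hb : K1Homog b)
    (hdvd : (f - 1) ∣ a * b) :
    (f - 1) ∣ a ∨ (f - 1) ∣ b := by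
  rcases eq_or_ne f 0 with rfl | hf0
  · exact Or.inl (zero_sub (1 : R) ▸ isUnit_one.neg.dvd)
  let _ : GradedRing 𝒜 := {}
  obtain ⟨k₁, ha⟩ := (hK1Homog a).mp ha
  obtain ⟨k₂, hb⟩ := (hK1Homog b).mp hb
  obtain ⟨d₁, x₁, hx₁, hax₁⟩ := exists_mem_sub_one_dvd_sub_of_mem_iSup 𝒜 hf k₁ ha
  obtain ⟨d₂, x₂, hx₂, hbx₂⟩ := exists_mem_sub_one_dvd_sub_of_mem_iSup 𝒜 hf k₂ hb
  have hx₁x₂ : f - 1 ∣ x₁ * x₂ := by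
    convert dvd_sub hdvd (dvd_add (hax₁.mul_right b) (hbx₂.mul_left x₁)) using 1
    ring
  rcases mul_eq_zero.mp
    (eq_zero_of_sub_one_dvd_of_mem 𝒜 hw hf hf0 (SetLike.mul_mem_graded hx₁ hx₂) hx₁x₂) with h | h
  · exact Or.inl (by rwa [h, sub_zero] at hax₁)
  · exact Or.inr (by rwa [h, sub_zero] at hbx₂)
end

section
/- Let $R$ be an integral domain graded by an abelian group $K_2$, $w \in K_2$ of infinite order, $f \in R$ homogeneous of degree $w$, and grade $R$ by $K_1 = K_2/\langle w \rangle$. If $g \in R$ is $K_1$-homogeneous and is written $g = g_0 + g_1 + \cdots + g_n$ with each $g_i$ being $K_2$-homogeneous of degree $\deg_{K_2}(g_0) + i w$, and $(f-1)g = ab$ for $K_1$-homogeneous $a = a_0 + \cdots + a_{n_1}$, $b = b_0 + \cdots + b_{n_2}$ decomposed analogously, then $(a_0 f^{n_1} + a_1 f^{n_1-1} + \cdots + a_{n_1})(b_0 f^{n_2} + b_1 f^{n_2-1} + \cdots + b_{n_2}) = 0$ in $R$. -/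
/-!
Record a `K₁`-homogeneous element `x` by the polynomial `P ∈ R[X]` whose `i`-th coefficient is
the `K₂`-component of `x` in degree `d + i • w`, so that `x = P(1)`. Since `w` has infinite order,
`P` is determined by `x` and `d`, and products of elements correspond to products of polynomials.
Comparing the two sides of `(f - 1) g = a b` component by component thus gives
`A B = X ^ j (f X - 1) G` in `R[X]`, the shift `j` existing because the component `-g₀` of the
left-hand side is nonzero. The claimed product is `f ^ (n₁ + n₂) A(1/f) B(1/f)`, the reversal of
`A B` evaluated at `f`, and it vanishes because `f X - 1` does at `X = 1/f`.
-/

open Finset Polynomial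

namespace Polynomial

variable {R : Type*} [CommRing R]

theorem natDegree_sum_range_C_mul_X_pow_le (N : ℕ) (x : ℕ → R) :
    (∑ i ∈ range (N + 1), C (x i) * X ^ i).natDegree ≤ N :=
  natDegree_sum_le_of_forall_le _ _ fun _ hi =>
    (natDegree_C_mul_X_pow_le _ _).trans (Nat.lt_succ_iff.mp (mem_range.mp hi))

theorem eval_reflect_sum_range_C_mul_X_pow (N : ℕ) (x : ℕ → R) (r : R) :
    (reflect N (∑ i ∈ range (N + 1), C (x i) * X ^ i)).eval r =
      ∑ i ∈ range (N + 1), x i * r ^ (N - i) := by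
  let reflectHom : R[X] →+ R[X] := ⟨⟨reflect N, reflect_zero⟩, fun p q => reflect_add p q N⟩
  rw [show reflect N _ = reflectHom _ from rfl, map_sum, eval_finsetSum]
  refine sum_congr rfl fun i hi => ?_
  simp [reflectHom, revAt_le (Nat.lt_succ_iff.mp (mem_range.mp hi))]

theorem eval_reflect_eq_zero_of_dvd [IsDomain R] {f : R} (hf : f ≠ 0) {P : R[X]} {N : ℕ}
    (hP : P.natDegree ≤ N) (hdvd : C f * X - 1 ∣ P) : (reflect N P).eval f = 0 := by
  let ι := algebraMap R (FractionRing R)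
  have hι : Function.Injective ι := IsFractionRing.injective R _
  have hfι : ι f ≠ 0 := (map_ne_zero_iff _ hι).mpr hf
  let _ := invertibleOfNonzero (inv_ne_zero hfι)
  have key := (eval₂_reflect_eq_zero_iff ι (ι f)⁻¹ N P hP).mpr <| by
    obtain ⟨Q, rfl⟩ := hdvd
    simp [eval₂_mul, mul_inv_cancel₀ hfι]
  rwa [invOf_eq_inv, inv_inv, eval₂_at_apply, map_eq_zero_iff _ hι] at key

end Polynomial

section ComponentPoly

variable {R ι : Type*} [CommRing R] [AddCommMonoid ι] (𝒜 : ι → AddSubgroup R)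

/-- For `x = x₀ + ⋯ + xₙ` with `xᵢ` homogeneous of degree `d + i • w`, as in the paper,
`P = x₀ + x₁ X + ⋯ + xₙ Xⁿ`. -/
def IsComponentPoly (d w : ι) (P : R[X]) (x : R) : Prop :=
  (∀ i : ℕ, P.coeff i ∈ 𝒜 (d + i • w)) ∧ P.eval 1 = x

namespace IsComponentPoly

variable {𝒜} {d d' w : ι} {P Q : R[X]} {x y : R}

theorem sum_range_C_mul_X_pow {N : ℕ} {x : ℕ → R} (hx : ∀ i ≤ N, x i ∈ 𝒜 (d + i • w)) :
    IsComponentPoly 𝒜 d w (∑ i ∈ range (N + 1), C (x i) * X ^ i) (∑ i ∈ range (N + 1), x i) := by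
  refine ⟨fun i => ?_, by simp [eval_finsetSum]⟩
  simp only [finsetSum_coeff, coeff_C_mul_X_pow, sum_ite_eq, mem_range]
  split_ifs with hi
  · exact hx i (Nat.lt_succ_iff.mp hi)
  · exact zero_mem _

theorem one [SetLike.GradedOne 𝒜] (w : ι) : IsComponentPoly 𝒜 0 w 1 1 := by
  refine ⟨fun i => ?_, eval_one⟩
  rcases i with _ | i
  · simpa using SetLike.one_mem_graded 𝒜
  · simp [coeff_one, zero_mem]

theorem C_mul_X {f : R} (hf : f ∈ 𝒜 w) : IsComponentPoly 𝒜 0 w (C f * X) f := by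
  refine ⟨fun i => ?_, by simp⟩
  rw [coeff_C_mul_X]
  split_ifs with hi
  · simpa [hi] using hf
  · exact zero_mem _

theorem sub (hx : IsComponentPoly 𝒜 d w P x) (hy : IsComponentPoly 𝒜 d w Q y) :
    IsComponentPoly 𝒜 d w (P - Q) (x - y) :=
  ⟨fun i => by simpa using sub_mem (hx.1 i) (hy.1 i), by rw [eval_sub, hx.2, hy.2]⟩

theorem mul [SetLike.GradedMonoid 𝒜] (hx : IsComponentPoly 𝒜 d w P x)
    (hy : IsComponentPoly 𝒜 d' w Q y) : IsComponentPoly 𝒜 (d + d') w (P * Q) (x * y) := by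
  refine ⟨fun k => ?_, by rw [eval_mul, hx.2, hy.2]⟩
  rw [coeff_mul]
  refine sum_mem fun ij hij => ?_
  have hdeg : d + ij.1 • w + (d' + ij.2 • w) = d + d' + k • w := by
    rw [← mem_antidiagonal.mp hij, add_nsmul]; abel
  exact hdeg ▸ SetLike.mul_mem_graded (hx.1 ij.1) (hy.1 ij.2)

theorem X_pow_mul {j : ℕ} (hx : IsComponentPoly 𝒜 (d + j • w) w P x) :
    IsComponentPoly 𝒜 d w (X ^ j * P) x := by
  refine ⟨fun i => ?_, by simp [hx.2]⟩
  rw [coeff_X_pow_mul']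
  split_ifs with hji
  · have hdeg : d + j • w + (i - j) • w = d + i • w := by
      rw [add_assoc, ← add_nsmul, Nat.add_sub_cancel' hji]
    exact hdeg ▸ hx.1 (i - j)
  · exact zero_mem _

variable [DecidableEq ι] [DirectSum.Decomposition 𝒜]

theorem decompose_apply (hx : IsComponentPoly 𝒜 d w P x) (e : ι) :
    (DirectSum.decompose 𝒜 x e : R) = ∑ i ∈ P.support, if d + i • w = e then P.coeff i else 0 := by
  rw [← hx.2, eval_eq_sum, Polynomial.sum_def, DirectSum.decompose_sum]
  simp only [one_pow, mul_one, DirectSum.sum_apply, AddSubmonoidClass.coe_finsetSum]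
  refine sum_congr rfl fun i _ => ?_
  split_ifs with hi
  · exact DirectSum.decompose_of_mem_same 𝒜 (hi ▸ hx.1 i)
  · exact DirectSum.decompose_of_mem_ne 𝒜 (hx.1 i) hi

theorem decompose_apply_ray (hw : Function.Injective fun i : ℕ => d + i • w)
    (hx : IsComponentPoly 𝒜 d w P x) (m : ℕ) :
    (DirectSum.decompose 𝒜 x (d + m • w) : R) = P.coeff m := by
  simp only [hx.decompose_apply, hw.eq_iff, sum_ite_eq', mem_support_iff]
  split_ifs with hm
  · rfl
  · exact (notMem_support_iff.mp hm).symm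

theorem exists_eq_of_decompose_apply_ne_zero (hx : IsComponentPoly 𝒜 d w P x) {e : ι}
    (he : (DirectSum.decompose 𝒜 x e : R) ≠ 0) : ∃ i : ℕ, d + i • w = e := by
  contrapose! he
  rw [hx.decompose_apply]
  exact sum_eq_zero fun i _ => if_neg (he i)

theorem unique (hw : Function.Injective fun i : ℕ => d + i • w)
    (hP : IsComponentPoly 𝒜 d w P x) (hQ : IsComponentPoly 𝒜 d w Q x) : P = Q :=
  ext fun m => by rw [← hP.decompose_apply_ray hw, hQ.decompose_apply_ray hw]

end IsComponentPoly

end ComponentPoly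

theorem eliminate_g_product_eq_zero_general
    {R K₂ : Type*} [CommRing R] [IsDomain R] [AddCommGroup K₂] [DecidableEq K₂]
    (𝒜 : K₂ → AddSubgroup R) [SetLike.GradedMonoid 𝒜] [DirectSum.Decomposition 𝒜]
    (w : K₂) (hw : addOrderOf w = 0) (f : R) (hf : f ∈ 𝒜 w) (hf0 : f ≠ 0)
    (n n₁ n₂ : ℕ) (g a b : ℕ → R) (dg da db : K₂)
    (hg : ∀ i ≤ n, g i ∈ 𝒜 (dg + i • w))
    (ha : ∀ i ≤ n₁, a i ∈ 𝒜 (da + i • w))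
    (hb : ∀ i ≤ n₂, b i ∈ 𝒜 (db + i • w))
    (hg0 : g 0 ≠ 0)
    (heq : (f - 1) * ∑ i ∈ range (n + 1), g i =
      (∑ i ∈ range (n₁ + 1), a i) * ∑ i ∈ range (n₂ + 1), b i) :
    (∑ i ∈ range (n₁ + 1), a i * f ^ (n₁ - i)) *
      (∑ i ∈ range (n₂ + 1), b i * f ^ (n₂ - i)) = 0 := by
  have hray (d : K₂) : Function.Injective fun i : ℕ => d + i • w :=
    (add_right_injective d).comp <|
      injective_nsmul_iff_not_isOfFinAddOrder.mpr (addOrderOf_eq_zero_iff.mp hw)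
  set A := ∑ i ∈ range (n₁ + 1), C (a i) * X ^ i
  set B := ∑ i ∈ range (n₂ + 1), C (b i) * X ^ i
  set G := ∑ i ∈ range (n + 1), C (g i) * X ^ i
  have hAB :=
    (IsComponentPoly.sum_range_C_mul_X_pow ha).mul (IsComponentPoly.sum_range_C_mul_X_pow hb)
  have hfG : IsComponentPoly 𝒜 dg w ((C f * X - 1) * G) ((f - 1) * ∑ i ∈ range (n + 1), g i) :=
    zero_add dg ▸ ((IsComponentPoly.C_mul_X hf).sub (IsComponentPoly.one w)).mul
      (IsComponentPoly.sum_range_C_mul_X_pow hg)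
  obtain ⟨j, rfl⟩ : ∃ j : ℕ, da + db + j • w = dg := by
    refine hAB.exists_eq_of_decompose_apply_ne_zero ?_
    have h0 : (DirectSum.decompose 𝒜 ((f - 1) * ∑ i ∈ range (n + 1), g i) dg : R) = -g 0 := by
      rw [← add_zero dg, ← zero_nsmul w, hfG.decompose_apply_ray (hray _) 0]
      simp [G, mul_coeff_zero]
    rw [← heq, h0]
    exact neg_ne_zero.mpr hg0
  have hfactor : A * B = X ^ j * ((C f * X - 1) * G) :=
    hAB.unique (hray _) (heq ▸ hfG.X_pow_mul)
  rw [← eval_reflect_sum_range_C_mul_X_pow, ← eval_reflect_sum_range_C_mul_X_pow, ← eval_mul,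
    ← reflect_mul _ _ (natDegree_sum_range_C_mul_X_pow_le _ _)
      (natDegree_sum_range_C_mul_X_pow_le _ _)]
  exact eval_reflect_eq_zero_of_dvd hf0
    (natDegree_mul_le.trans (add_le_add (natDegree_sum_range_C_mul_X_pow_le _ _)
      (natDegree_sum_range_C_mul_X_pow_le _ _)))
    (hfactor ▸ (Dvd.intro _ rfl).mul_left _)

/-- In a `K₂`-graded integral domain with `w` of infinite order and
`f` homogeneous of degree `w` (nonzero), if a `K₁`-homogeneous element
`g = g₀ + ⋯ + gₙ` (with `gᵢ` of `K₂`-degree `d_g + i•w`) satisfies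
`(f-1)·g = a·b` for `K₁`-homogeneous `a = a₀ + ⋯ + a_{n₁}`, `b = b₀ + ⋯ + b_{n₂}`
decomposed analogously, then
`(a₀ f^{n₁} + ⋯ + a_{n₁})(b₀ f^{n₂} + ⋯ + b_{n₂}) = 0`. -/
theorem eliminate_g_product_eq_zero
    {R K₂ : Type*} [CommRing R] [IsDomain R] [AddCommGroup K₂] [DecidableEq K₂]
    (𝒜 : K₂ → AddSubgroup R) [SetLike.GradedMonoid 𝒜] [DirectSum.Decomposition 𝒜]
    (w : K₂) (hw : addOrderOf w = 0) (f : R) (hf : f ∈ 𝒜 w) (hf0 : f ≠ 0)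
    (n n₁ n₂ : ℕ) (g a b : ℕ → R) (dg da db : K₂)
    (hg : ∀ i ≤ n, g i ∈ 𝒜 (dg + i • w))
    (ha : ∀ i ≤ n₁, a i ∈ 𝒜 (da + i • w))
    (hb : ∀ i ≤ n₂, b i ∈ 𝒜 (db + i • w))
    (hg0 : g 0 ≠ 0) (hgn : g n ≠ 0)
    (ha0 : a 0 ≠ 0) (han : a n₁ ≠ 0)
    (hb0 : b 0 ≠ 0) (hbn : b n₂ ≠ 0)
    (heq : (f - 1) * ∑ i ∈ range (n + 1), g i =
      (∑ i ∈ range (n₁ + 1), a i) * ∑ i ∈ range (n₂ + 1), b i) :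
    (∑ i ∈ range (n₁ + 1), a i * f ^ (n₁ - i)) *
      (∑ i ∈ range (n₂ + 1), b i * f ^ (n₂ - i)) = 0 :=
  eliminate_g_product_eq_zero_general 𝒜 w hw f hf hf0 n n₁ n₂ g a b dg da db hg ha hb hg0 heq
end

section
/- Let $A = \bigoplus_{m \in M} A_m$ be an algebra graded by an abelian group $M$, $\psi \colon M \to N$ a homomorphism of abelian groups, and suppose $f_1,\ldots,f_l \in A$ are homogeneous of degrees $w_1,\ldots,w_l \in \ker(\psi)$ respectively. Then the quotient $A / \langle f_1 - 1, \ldots, f_l - 1 \rangle$ carries a natural $N$-grading such that the quotient map $A \to A/\langle f_i - 1 \rangle$ is a morphism of graded algebras with accompanying homomorphism $\psi$ (i.e., the image of $A_m$ lies in the degree-$\psi(m)$ component). -/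
/-!
Coarsening the `M`-grading along `ψ` gives an `N`-grading of `A` whose degree-`n` part is
`⨁_{ψ m = n} A_m`. For it, `f i` and `1` both have degree `0` because `ψ (w i) = 0`, so
every generator `f i - 1` is homogeneous and the ideal they span is homogeneous. The image
of an `N`-grading in the quotient by a homogeneous ideal is again a grading: the components
of an element of the ideal lie in the ideal, so a sum of images of homogeneous elements
vanishes only if each summand does.
-/

open DirectSum Function

theorem DirectSum.IsInternal.of_surjective_map {ι κ M N σ τ : Type*}
    [DecidableEq ι] [DecidableEq κ] [AddCommGroup M] [AddCommGroup N]
    [SetLike σ M] [AddSubgroupClass σ M] [SetLike τ N] [AddSubgroupClass τ N]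
    {ℳ : ι → σ} {𝒩 : κ → τ} (hℳ : IsInternal ℳ) (g : M →+ N) (hg : Surjective g)
    (φ : (⨁ i, ℳ i) →+ ⨁ k, 𝒩 k) (hφ : Surjective φ)
    (hcomm : ∀ z, DirectSum.coeAddMonoidHom 𝒩 (φ z) = g (DirectSum.coeAddMonoidHom ℳ z))
    (hker : ∀ z, g (DirectSum.coeAddMonoidHom ℳ z) = 0 → φ z = 0) : IsInternal 𝒩 := by
  refine ⟨(injective_iff_map_eq_zero _).2 fun y hy => ?_, fun x => ?_⟩
  · obtain ⟨z, rfl⟩ := hφ y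
    exact hker z (hcomm z ▸ hy)
  · obtain ⟨z, rfl⟩ := hg.comp hℳ.2 x
    exact ⟨φ z, hcomm z⟩

section Regrade

variable {ι κ R : Type*} [AddCommGroup R] (𝒜 : ι → AddSubgroup R) (ψ : ι → κ)

def regrade (k : κ) : AddSubgroup R := ⨆ i : {i // ψ i = k}, 𝒜 i

theorem le_regrade (i : ι) : 𝒜 i ≤ regrade 𝒜 ψ (ψ i) :=
  le_iSup (fun i : {i // ψ i = ψ _} => 𝒜 i) ⟨i, rfl⟩

variable [DecidableEq ι] [DecidableEq κ]

def regradeMap : (⨁ i, 𝒜 i) →+ ⨁ k, regrade 𝒜 ψ k :=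
  toAddMonoid fun i => (of _ (ψ i)).comp (AddSubgroup.inclusion (le_regrade 𝒜 ψ i))

theorem regradeMap_of {i : ι} (x : 𝒜 i) :
    regradeMap 𝒜 ψ (of _ i x) = of _ (ψ i) ⟨x, le_regrade 𝒜 ψ i x.2⟩ :=
  toAddMonoid_of _ _ _

theorem of_mem_range_regradeMap {k : κ} (x : regrade 𝒜 ψ k) :
    of _ k x ∈ (regradeMap 𝒜 ψ).range := by
  obtain ⟨x, hx⟩ := x
  induction hx using AddSubgroup.iSup_induction' with
  | hp i x hx =>
    obtain ⟨i, rfl⟩ := i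
    exact ⟨of _ i ⟨x, hx⟩, regradeMap_of 𝒜 ψ _⟩
  | h1 => exact ⟨0, (map_zero _).trans (map_zero (of _ k)).symm⟩
  | hadd x y hx hy ihx ihy =>
    exact map_add (of (fun k => regrade 𝒜 ψ k) k) ⟨x, hx⟩ ⟨y, hy⟩ ▸ add_mem ihx ihy

theorem regradeMap_surjective : Surjective (regradeMap 𝒜 ψ) := by
  refine AddMonoidHom.range_eq_top.1 <| eq_top_iff.2 fun y _ =>
    DirectSum.induction_on y (zero_mem _) (fun _ => of_mem_range_regradeMap 𝒜 ψ) fun _ _ => add_mem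

theorem coe_regradeMap (z : ⨁ i, 𝒜 i) :
    DirectSum.coeAddMonoidHom (regrade 𝒜 ψ) (regradeMap 𝒜 ψ z) =
      DirectSum.coeAddMonoidHom 𝒜 z := by
  induction z using DirectSum.induction_on with
  | zero => simp
  | of i x => rw [regradeMap_of, coeAddMonoidHom_of, coeAddMonoidHom_of]
  | add z z' hz hz' => rw [map_add, map_add, hz, hz', map_add]

theorem isInternal_regrade (h : IsInternal 𝒜) : IsInternal (regrade 𝒜 ψ) :=
  IsInternal.of_surjective_map h (.id R) surjective_id _ (regradeMap_surjective 𝒜 ψ)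
    (coe_regradeMap 𝒜 ψ) fun z hz => by rw [h.1 (hz.trans (map_zero _).symm), map_zero]

noncomputable instance [Decomposition 𝒜] : Decomposition (regrade 𝒜 ψ) :=
  (isInternal_regrade 𝒜 ψ (Decomposition.isInternal 𝒜)).chooseDecomposition

end Regrade

section RegradeMonoid

variable {ι κ R : Type*} [Ring R] [AddMonoid ι] [AddMonoid κ] (𝒜 : ι → AddSubgroup R)
  [SetLike.GradedMonoid 𝒜] (ψ : ι →+ κ)

theorem regrade_mul_mem {k k' : κ} {a b : R} (ha : a ∈ regrade 𝒜 ψ k)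
    (hb : b ∈ regrade 𝒜 ψ k') : a * b ∈ regrade 𝒜 ψ (k + k') := by
  refine AddSubgroup.iSup_induction _ (C := (· * b ∈ _)) ha (fun ⟨i, hi⟩ x hx => ?_)
    (by simp) fun x x' hx hx' => by simpa only [add_mul] using add_mem hx hx'
  refine AddSubgroup.iSup_induction _ (C := (x * · ∈ _)) hb (fun ⟨j, hj⟩ y hy => ?_)
    (by simp) fun y y' hy hy' => by simpa only [mul_add] using add_mem hy hy'
  subst hi hj
  exact map_add ψ i j ▸ le_regrade 𝒜 ψ (i + j) (SetLike.mul_mem_graded hx hy)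

noncomputable instance [DecidableEq ι] [DecidableEq κ] [Decomposition 𝒜] :
    GradedRing (regrade 𝒜 ψ) where
  one_mem := map_zero ψ ▸ le_regrade 𝒜 ψ 0 SetLike.GradedOne.one_mem
  mul_mem _ _ _ _ := regrade_mul_mem 𝒜 ψ

end RegradeMonoid

section Quotient

variable {κ R : Type*} [CommRing R] (I : Ideal R) (ℬ : κ → AddSubgroup R)

abbrev quotientGrading (k : κ) : AddSubgroup (R ⧸ I) :=
  (ℬ k).map (Ideal.Quotient.mk I).toAddMonoidHom

theorem mk_mem_quotientGrading {k : κ} {x : R} (hx : x ∈ ℬ k) :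
    Ideal.Quotient.mk I x ∈ quotientGrading I ℬ k :=
  ⟨x, hx, rfl⟩

instance [AddMonoid κ] [SetLike.GradedMonoid ℬ] : SetLike.GradedMonoid (quotientGrading I ℬ) where
  one_mem := map_one (Ideal.Quotient.mk I) ▸ mk_mem_quotientGrading I ℬ SetLike.GradedOne.one_mem
  mul_mem := by
    rintro i j _ _ ⟨x, hx, rfl⟩ ⟨y, hy, rfl⟩
    exact map_mul (Ideal.Quotient.mk I) x y ▸
      mk_mem_quotientGrading I ℬ (SetLike.mul_mem_graded hx hy)

variable [DecidableEq κ]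

def quotientGradingMap : (⨁ k, ℬ k) →+ ⨁ k, quotientGrading I ℬ k :=
  DirectSum.map fun k => (Ideal.Quotient.mk I).toAddMonoidHom.addSubgroupMap (ℬ k)

theorem coe_quotientGradingMap (z : ⨁ k, ℬ k) :
    DirectSum.coeAddMonoidHom (quotientGrading I ℬ) (quotientGradingMap I ℬ z) =
      Ideal.Quotient.mk I (DirectSum.coeAddMonoidHom ℬ z) := by
  induction z using DirectSum.induction_on with
  | zero => simp
  | of k x => rw [quotientGradingMap, map_of, coeAddMonoidHom_of, coeAddMonoidHom_of]; rfl
  | add z z' hz hz' => rw [map_add, map_add, hz, hz', map_add, map_add]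

theorem isInternal_quotientGrading [Decomposition ℬ] (hI : Submodule.IsHomogeneous I ℬ) :
    IsInternal (quotientGrading I ℬ) := by
  refine IsInternal.of_surjective_map (Decomposition.isInternal ℬ)
    (Ideal.Quotient.mk I).toAddMonoidHom Ideal.Quotient.mk_surjective (quotientGradingMap I ℬ)
    ((map_surjective _).2 fun k => AddMonoidHom.addSubgroupMap_surjective _ _)
    (coe_quotientGradingMap I ℬ) fun z hz => ?_
  have hcomp := (hI.mem_iff ℬ (x := (decompose ℬ).symm z)).1 (Ideal.Quotient.eq_zero_iff_mem.1 hz)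
  rw [Equiv.apply_symm_apply] at hcomp
  ext k
  exact Ideal.Quotient.eq_zero_iff_mem.2 (hcomp k)

end Quotient

/-- Let `A` be an algebra graded by an abelian group `M`,
`ψ : M → N` a homomorphism of abelian groups, and `f₁,…,f_l ∈ A` homogeneous of
degrees `w₁,…,w_l ∈ ker ψ`.  Then the quotient `A ⧸ ⟨f₁ - 1, …, f_l - 1⟩` carries a
natural `N`-grading (a graded-ring structure, i.e. a direct sum decomposition into
multiplicatively compatible components) such that the quotient map is a morphism of
graded algebras with accompanying homomorphism `ψ`: the image of the degree-`m`
component lands in the degree-`ψ m` component. -/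
theorem quotient_by_f_sub_one_graded
    {A M N : Type*} [CommRing A] [AddCommGroup M] [AddCommGroup N] [DecidableEq M] [DecidableEq N]
    (𝒜 : M → AddSubgroup A) [SetLike.GradedMonoid 𝒜] [DirectSum.Decomposition 𝒜]
    (ψ : M →+ N) (l : ℕ) (f : Fin l → A) (w : Fin l → M)
    (hf : ∀ i, f i ∈ 𝒜 (w i)) (hw : ∀ i, ψ (w i) = 0) :
    ∃ ℬ : N → AddSubgroup (A ⧸ Ideal.span (Set.range fun i => f i - 1)),
      SetLike.GradedMonoid ℬ ∧
      Nonempty (DirectSum.Decomposition ℬ) ∧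
      ∀ (m : M) (x : A), x ∈ 𝒜 m →
        Ideal.Quotient.mk (Ideal.span (Set.range fun i => f i - 1)) x ∈ ℬ (ψ m) := by
  set I := Ideal.span (Set.range fun i => f i - 1)
  have hI : I.IsHomogeneous (regrade 𝒜 ψ) := by
    refine Ideal.homogeneous_span _ _ ?_
    rintro _ ⟨i, rfl⟩
    exact ⟨0, sub_mem (hw i ▸ le_regrade 𝒜 ψ _ (hf i)) SetLike.GradedOne.one_mem⟩
  exact ⟨quotientGrading I (regrade 𝒜 ψ), inferInstance,
    ⟨(isInternal_quotientGrading I _ hI).chooseDecomposition⟩,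
    fun m x hx => mk_mem_quotientGrading I _ (le_regrade 𝒜 ψ m hx)⟩
end

section
/- Let $K$ be a field, $a \geq 1$ an integer, and let $\mathcal{G} = \{T_1T_6T_7^2 - T_2T_3T_5,\ T_2^aT_4 - T_6T_7,\ T_1T_2^{a-1}T_4T_7 - T_3T_5\}$ generate the ideal $I_0 \subseteq K[T_1,\ldots,T_7]$. Then for each variable $T_i$, no element of $\mathcal{G}$ is divisible by $T_i$, and consequently, if $\mathcal{G}$ is a Gröbner basis of $I_0$ with respect to a degree reverse lexicographic order, then $I_0 : T_i^\infty = I_0$ for every $i$, and hence $I_0 : (T_1\cdots T_7)^\infty = I_0$. -/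
/-!
Write `Tⱼ₊₁ = X j`, `a = b + 1`, `P = X₁^a X₃ - X₅X₆`, `Q = X₀X₁^b X₃X₆ - X₂X₄`. Then `I₀ = (P, Q)`
is the kernel of the map `φ : K[X] → Frac K[X]` fixing every variable except
`X₆ ↦ X₁^a X₃ / X₅` and `X₄ ↦ X₀X₁^(2b+1)X₃² / (X₂X₅)` (solve `P = 0` for `X₆`, then `Q = 0`
for `X₄`). Hence `I₀` is prime and contains no variable, which gives both saturations.

For `ker φ ⊆ I₀`: modulo `I₀`, `X₂X₅X₄` and `X₂X₅X₆` are polynomials in the other variables, so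
`(X₂X₅)^N f ≡ g` for some `g` not involving `X₄, X₆`; if `φ f = 0` then `g = φ g = 0`. Finally
`X₂` and `X₅` are nonzerodivisors modulo `I₀` because `P` and `Q` are prime (each is linear in a
variable with a variable as coefficient) and reducing modulo `X₂`, resp. `X₅`, turns one
generator into a monomial not divisible by the other.
-/

open MvPolynomial

theorem Polynomial.prime_C_mul_X_add_C {R : Type*} [CommRing R] [IsDomain R]
    [UniqueFactorizationMonoid R] {a b : R} (ha : Prime a) (hab : ¬ a ∣ b) :
    Prime (C a * X + C b) :=
  (irreducible_C_mul_X_add_C ha.ne_zero (ha.irreducible.isRelPrime_iff_not_dvd.mpr hab)).prime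

namespace MvPolynomial

variable {σ R : Type*} [CommRing R]

theorem optionEquivLeft_rename_some (S : Type*) (c : MvPolynomial S R) :
    optionEquivLeft R S (rename some c) = Polynomial.C c := by
  induction c using MvPolynomial.induction_on with
  | C r => simp [optionEquivLeft_C]
  | add f g hf hg => simp [hf, hg]
  | mul_X f j hf => simp [hf, optionEquivLeft_X_some]

theorem prime_X_mul_X_add_rename [IsDomain R] [UniqueFactorizationMonoid R] [DecidableEq σ]
    {i j : σ} (hij : i ≠ j) {c : MvPolynomial {k // k ≠ j} R} (hc : ¬ X ⟨i, hij⟩ ∣ c) :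
    Prime (X i * X j + rename Subtype.val c) := by
  let e := (renameEquiv R (Equiv.optionSubtypeNe j).symm).trans (optionEquivLeft R {k // k ≠ j})
  rw [← MulEquiv.prime_iff e.toMulEquiv]
  have hc' : rename (Equiv.optionSubtypeNe j).symm (rename Subtype.val c) = rename some c := by
    rw [rename_rename]
    congr 2
    funext ⟨k, hk⟩
    exact Equiv.optionSubtypeNe_symm_of_ne hk
  simpa [e, hc', optionEquivLeft_rename_some, Equiv.optionSubtypeNe_symm_of_ne hij,
    optionEquivLeft_X_some, optionEquivLeft_X_none]
    using Polynomial.prime_C_mul_X_add_C (X_prime (i := (⟨i, hij⟩ : {k // k ≠ j}))) hc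

theorem sub_aeval_mem {I : Ideal (MvPolynomial σ R)} (v : σ → MvPolynomial σ R)
    (hv : ∀ j, X j - v j ∈ I) (f : MvPolynomial σ R) : f - aeval v f ∈ I := by
  have h : (Ideal.Quotient.mkₐ R I).comp (aeval v) = Ideal.Quotient.mkₐ R I := by
    ext j
    simpa [Ideal.Quotient.eq] using I.neg_mem_iff.mpr (hv j)
  rw [← Ideal.Quotient.eq, ← Ideal.Quotient.mkₐ_eq_mk R, ← AlgHom.comp_apply, h]

theorem X_dvd_sub_aeval_update_zero [DecidableEq σ] (i : σ) (f : MvPolynomial σ R) :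
    X i ∣ f - aeval (Function.update X i 0) f := by
  rw [← Ideal.mem_span_singleton]
  refine sub_aeval_mem _ (fun j => ?_) f
  rcases eq_or_ne j i with rfl | hj
  · simp
  · simp [hj]

theorem not_dvd_of_eval {g f : MvPolynomial σ R} (v : σ → R) (hg : eval v g = 0)
    (hf : eval v f ≠ 0) : ¬ g ∣ f := by
  rintro ⟨h, rfl⟩
  simp [hg] at hf

theorem exists_pow_mul_sub_mem {A : Subalgebra R (MvPolynomial σ R)}
    {I : Ideal (MvPolynomial σ R)} {s : MvPolynomial σ R} (hs : s ∈ A)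
    (hX : ∀ j, ∃ g ∈ A, s * X j - g ∈ I) (f : MvPolynomial σ R) :
    ∃ N, ∃ g ∈ A, s ^ N * f - g ∈ I := by
  induction f using MvPolynomial.induction_on with
  | C r => exact ⟨0, C r, A.algebraMap_mem r, by simp⟩
  | add f₁ f₂ h₁ h₂ =>
    obtain ⟨N₁, g₁, hg₁, hm₁⟩ := h₁
    obtain ⟨N₂, g₂, hg₂, hm₂⟩ := h₂
    refine ⟨N₁ + N₂, s ^ N₂ * g₁ + s ^ N₁ * g₂,
      add_mem (mul_mem (pow_mem hs _) hg₁) (mul_mem (pow_mem hs _) hg₂), ?_⟩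
    convert add_mem (I.mul_mem_left (s ^ N₂) hm₁) (I.mul_mem_left (s ^ N₁) hm₂) using 1
    ring
  | mul_X f j h =>
    obtain ⟨N, g, hg, hm⟩ := h
    obtain ⟨gj, hgj, hmj⟩ := hX j
    refine ⟨N + 1, g * gj, mul_mem hg hgj, ?_⟩
    convert add_mem (I.mul_mem_left (s * X j) hm) (I.mul_mem_left g hmj) using 1
    ring

end MvPolynomial

/-- `σ` is reduction modulo `x`: from `x f = g p + h q`, reducing gives `q ∣ σ g`, so
`g ≡ u q (mod x)`, and then `x ∣ u p + h` because `x ∤ q`. -/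
theorem Ideal.mem_span_pair_of_mul_mem {R : Type*} [CommRing R] [IsDomain R] (σ : R →+* R)
    {x p q f : R} (hx : Prime x) (hq : Prime q) (hσx : σ x = 0) (hσ : ∀ r, x ∣ r - σ r)
    (hσq : σ q = q) (hqp : ¬ q ∣ σ p) (hxq : ¬ x ∣ q) (h : x * f ∈ Ideal.span {p, q}) :
    f ∈ Ideal.span {p, q} := by
  obtain ⟨g, h', hgh⟩ := Ideal.mem_span_pair.mp h
  have hσgh : σ g * σ p + σ h' * q = 0 := by
    simpa [hσx, hσq] using congrArg σ hgh
  obtain ⟨u, hu⟩ : q ∣ σ g :=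
    (hq.dvd_or_dvd ⟨-σ h', by linear_combination hσgh⟩).resolve_right hqp
  obtain ⟨v, hv⟩ := hσ g
  have hx' : x * (f - v * p) = q * (u * p + h') := by
    linear_combination -hgh + p * hv + p * hu
  obtain ⟨w, hw⟩ := (hx.dvd_or_dvd ⟨_, hx'.symm⟩).resolve_left hxq
  refine Ideal.mem_span_pair.mpr ⟨v, w, mul_left_cancel₀ hx.ne_zero ?_⟩
  linear_combination -hx' - q * hw

theorem Ideal.IsPrime.mem_of_mul_pow_mem {R : Type*} [CommSemiring R] {I : Ideal R}
    (hI : I.IsPrime) {g x : R} (hx : x ∉ I) {k : ℕ} (h : g * x ^ k ∈ I) : g ∈ I :=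
  (hI.mem_or_mem h).resolve_right fun hk => hx (hI.mem_of_pow_mem k hk)

namespace IdealI₀

variable (K : Type*) [Field K] (b : ℕ)

noncomputable def P : MvPolynomial (Fin 7) K := X 1 ^ (b + 1) * X 3 - X 5 * X 6

noncomputable def Q : MvPolynomial (Fin 7) K := X 0 * X 1 ^ b * X 3 * X 6 - X 2 * X 4

noncomputable def ideal : Ideal (MvPolynomial (Fin 7) K) := Ideal.span {P K b, Q K b}

theorem prime_P : Prime (P K b) := by
  have h := prime_X_mul_X_add_rename (R := K) (i := (5 : Fin 7)) (j := 6) (by decide)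
    (c := -(X ⟨1, by decide⟩ ^ (b + 1) * X ⟨3, by decide⟩))
    (not_dvd_of_eval (Function.update 1 ⟨5, by decide⟩ 0) (by simp) (by simp))
  rw [P, ← neg_sub]
  refine Prime.neg ?_
  simpa [sub_eq_add_neg] using h

theorem prime_Q : Prime (Q K b) := by
  have h := prime_X_mul_X_add_rename (R := K) (i := (2 : Fin 7)) (j := 4) (by decide)
    (c := -(X ⟨0, by decide⟩ * X ⟨1, by decide⟩ ^ b * X ⟨3, by decide⟩ * X ⟨6, by decide⟩))
    (not_dvd_of_eval (Function.update 1 ⟨2, by decide⟩ 0) (by simp) (by simp))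
  rw [Q, ← neg_sub]
  refine Prime.neg ?_
  simpa [sub_eq_add_neg] using h

theorem mem_ideal_of_X_five_mul_mem {f : MvPolynomial (Fin 7) K} (h : X 5 * f ∈ ideal K b) :
    f ∈ ideal K b :=
  Ideal.mem_span_pair_of_mul_mem (x := X 5) (p := P K b) (q := Q K b)
    (aeval (R := K) (Function.update X 5 0)).toRingHom X_prime (prime_Q K b) (by simp)
    (X_dvd_sub_aeval_update_zero 5) (by simp [Q]) (not_dvd_of_eval 1 (by simp [Q]) (by simp [P]))
    (not_dvd_of_eval ![1, 1, 0, 1, 1, 0, 1] (by simp) (by simp [Q])) h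

theorem mem_ideal_of_X_two_mul_mem {f : MvPolynomial (Fin 7) K} (h : X 2 * f ∈ ideal K b) :
    f ∈ ideal K b := by
  rw [ideal, Set.pair_comm] at h ⊢
  exact Ideal.mem_span_pair_of_mul_mem (x := X 2) (p := Q K b) (q := P K b)
    (aeval (R := K) (Function.update X 2 0)).toRingHom X_prime (prime_P K b) (by simp)
    (X_dvd_sub_aeval_update_zero 2) (by simp [P]) (not_dvd_of_eval 1 (by simp [P]) (by simp [Q]))
    (not_dvd_of_eval ![1, 1, 0, 1, 1, 1, 0] (by simp) (by simp [P])) h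

theorem mem_ideal_of_pow_mul_mem {f : MvPolynomial (Fin 7) K} (N : ℕ)
    (h : (X 2 * X 5) ^ N * f ∈ ideal K b) : f ∈ ideal K b := by
  induction N generalizing f with
  | zero => simpa using h
  | succ N ih =>
    refine mem_ideal_of_X_five_mul_mem K b (mem_ideal_of_X_two_mul_mem K b (ih ?_))
    convert h using 1
    ring

local notation "ι" => algebraMap (MvPolynomial (Fin 7) K) (FractionRing (MvPolynomial (Fin 7) K))

noncomputable def param : Fin 7 → FractionRing (MvPolynomial (Fin 7) K) :=
  ![ι (X 0), ι (X 1), ι (X 2), ι (X 3), ι (X 0 * X 1 ^ (2 * b + 1) * X 3 ^ 2) / ι (X 2 * X 5),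
    ι (X 5), ι (X 1 ^ (b + 1) * X 3) / ι (X 5)]

theorem algebraMap_X_ne_zero (j : Fin 7) : ι (X j) ≠ 0 :=
  (map_ne_zero_iff _ (IsFractionRing.injective _ _)).mpr (X_ne_zero j)

theorem param_ne_zero (j : Fin 7) : param K b j ≠ 0 := by
  have := algebraMap_X_ne_zero K
  fin_cases j <;> simp [param, this]

theorem ideal_le_ker : ideal K b ≤ RingHom.ker (aeval (param K b)) := by
  have := algebraMap_X_ne_zero K
  rw [ideal, Ideal.span_le, Set.pair_subset_iff]
  constructor <;> simp [P, Q, param] <;> field_simp <;> ring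

noncomputable abbrev fixedByParam : Subalgebra K (MvPolynomial (Fin 7) K) :=
  AlgHom.equalizer (aeval (param K b))
    (IsScalarTower.toAlgHom K (MvPolynomial (Fin 7) K) (FractionRing (MvPolynomial (Fin 7) K)))

theorem exists_mul_X_sub_mem (j : Fin 7) :
    ∃ g ∈ fixedByParam K b, X 2 * X 5 * X j - g ∈ ideal K b := by
  by_cases h4 : j = 4
  · subst h4
    refine ⟨X 0 * X 1 ^ (2 * b + 1) * X 3 ^ 2, by simp [AlgHom.mem_equalizer, param],
      Ideal.mem_span_pair.mpr ⟨-(X 0 * X 1 ^ b * X 3), -X 5, ?_⟩⟩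
    simp only [P, Q]
    ring
  by_cases h6 : j = 6
  · subst h6
    refine ⟨X 2 * X 1 ^ (b + 1) * X 3, by simp [AlgHom.mem_equalizer, param],
      Ideal.mem_span_pair.mpr ⟨-X 2, 0, ?_⟩⟩
    simp only [P]
    ring
  · refine ⟨X 2 * X 5 * X j, ?_, by simp⟩
    fin_cases j <;> simp_all [AlgHom.mem_equalizer, param]

theorem ker_le_ideal : RingHom.ker (aeval (param K b)) ≤ ideal K b := by
  intro f hf
  have hs : X 2 * X 5 ∈ fixedByParam K b := by simp [AlgHom.mem_equalizer, param]
  obtain ⟨N, g, hg, hm⟩ := exists_pow_mul_sub_mem hs (exists_mul_X_sub_mem K b) f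
  have hg0 : g = 0 := by
    have h := ideal_le_ker K b hm
    rw [RingHom.mem_ker, map_sub, map_mul, RingHom.mem_ker.mp hf, mul_zero, zero_sub,
      neg_eq_zero, (AlgHom.mem_equalizer _ _ _).mp hg] at h
    simpa using h
  rw [hg0, sub_zero] at hm
  exact mem_ideal_of_pow_mul_mem K b N hm

theorem ideal_eq_ker : ideal K b = RingHom.ker (aeval (param K b)) :=
  le_antisymm (ideal_le_ker K b) (ker_le_ideal K b)

theorem isPrime_ideal : (ideal K b).IsPrime := by
  rw [ideal_eq_ker]
  exact RingHom.ker_isPrime _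

theorem X_notMem_ideal (i : Fin 7) : X i ∉ ideal K b := by
  rw [ideal_eq_ker, RingHom.mem_ker, aeval_X]
  exact param_ne_zero K b i

end IdealI₀

open MvPolynomial in
/-- Let
`𝒢 = {T₁T₆T₇² - T₂T₃T₅, T₂^aT₄ - T₆T₇, T₁T₂^{a-1}T₄T₇ - T₃T₅}` generate
`I₀ ⊆ K[T₁,…,T₇]` (variables `X 0,…,X 6`), with `a ≥ 1`.  Then no element of `𝒢`
is divisible by any variable `Tᵢ`; and (𝒢 being a Gröbner basis of `I₀` for degree
reverse lexicographic orders) `I₀ : Tᵢ^∞ = I₀` for every `i`, and hence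
`I₀ : (T₁⋯T₇)^∞ = I₀`. -/
theorem I0_saturated_wrt_variables (K : Type*) [Field K] (a : ℕ) (ha : 1 ≤ a) :
    let G : Set (MvPolynomial (Fin 7) K) :=
      {X 0 * X 5 * X 6 ^ 2 - X 1 * X 2 * X 4,
       X 1 ^ a * X 3 - X 5 * X 6,
       X 0 * X 1 ^ (a - 1) * X 3 * X 6 - X 2 * X 4}
    let I₀ : Ideal (MvPolynomial (Fin 7) K) :=
      Ideal.span {X 1 ^ a * X 3 - X 5 * X 6,
        X 0 * X 1 ^ (a - 1) * X 3 * X 6 - X 2 * X 4}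
    (∀ i : Fin 7, ∀ g ∈ G, ¬ (X i : MvPolynomial (Fin 7) K) ∣ g) ∧
    (∀ (i : Fin 7) (g : MvPolynomial (Fin 7) K) (k : ℕ),
      g * X i ^ k ∈ I₀ → g ∈ I₀) ∧
    (∀ (g : MvPolynomial (Fin 7) K) (k : ℕ),
      g * (∏ i : Fin 7, X i) ^ k ∈ I₀ → g ∈ I₀) := by
  intro G I₀
  obtain ⟨b, rfl⟩ : ∃ b, a = b + 1 := ⟨a - 1, by omega⟩
  have hI : I₀ = IdealI₀.ideal K b := by simp [I₀, IdealI₀.ideal, IdealI₀.P, IdealI₀.Q]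
  have hprime := IdealI₀.isPrime_ideal K b
  refine ⟨fun i g hg => ?_, fun i g k h => ?_, fun g k h => ?_⟩
  · -- The two monomials of each binomial have disjoint variables, with those of the second
    -- forming `B`; vanish on `B` or on its complement, whichever contains `i`.
    let v (B : Finset (Fin 7)) (j : Fin 7) : K := if (j ∈ B ↔ i ∈ B) then 0 else 1
    simp only [G, Set.mem_insert_iff, Set.mem_singleton_iff, Nat.add_sub_cancel] at hg
    rcases hg with rfl | rfl | rfl <;>
      [apply not_dvd_of_eval (v {1, 2, 4}); apply not_dvd_of_eval (v {5, 6});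
        apply not_dvd_of_eval (v {2, 4})] <;>
      fin_cases i <;> simp [v]
  · rw [hI] at h ⊢
    exact hprime.mem_of_mul_pow_mem (IdealI₀.X_notMem_ideal K b i) h
  · rw [hI] at h ⊢
    refine hprime.mem_of_mul_pow_mem (fun hX => ?_) h
    obtain ⟨i, -, hi⟩ := hprime.prod_mem_iff.mp hX
    exact IdealI₀.X_notMem_ideal K b i hi
end
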